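/- Let p be a prime and G an abelian group of order pⁿ with |M(G)| = p^{n(n−1)/2}. Then G is elementary abelian. -/

import Mathlib

/-- The canonical presentation map `FreeGroup G →* G`. -/
def presentation (G : Type*) [Group G] : FreeGroup G →* G := FreeGroup.lift id

/-- The Schur multiplier `M(G) ≅ H₂(G, ℤ)` of a group `G`, defined via Hopf's formula
`M(G) = (R ∩ [F,F]) / [F,R]` for the free presentation `F = FreeGroup G`,
`R = ker(F →* G)`. -/
def SchurMultiplier (G : Type*) [Group G] : Type _ :=
  ↥((presentation G).ker ⊓ commutator (FreeGroup G)) ⧸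
    (⁅(⊤ : Subgroup (FreeGroup G)), (presentation G).ker⁆.subgroupOf
      ((presentation G).ker ⊓ commutator (FreeGroup G)))

noncomputable instance (G : Type*) [Group G] : Group (SchurMultiplier G) :=
  QuotientGroup.Quotient.group _

/-!
For abelian `G`, commutators of lifts to the free group `F` induce an alternating bimultiplicative
pairing `G × G → M(G)` whose values generate `M(G)`. Write `G = ∏ᵢ ℤ/p^{eᵢ}` with `∑ eᵢ = n`; then
`M(G)` is generated by the values on pairs `i < j` of basis elements, each of order dividing
`p^{min(eᵢ, eⱼ)}`, so `|M(G)|` divides `p^{∑_{i<j} min(eᵢ, eⱼ)}`. As `2 ∑_{i<j} eᵢ eⱼ = n² - ∑ eᵢ²`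
and `∑ eᵢ² ≥ n + 2` as soon as some `eᵢ ≥ 2`, that exponent is below `n(n-1)/2` unless all
`eᵢ ≤ 1`, i.e. unless the generators, hence all of `G`, have exponent `p`.
-/

open Subgroup

section PairSums

open Finset

variable {ι : Type*} [Fintype ι] [LinearOrder ι]

theorem sum_pairs_lt_eq_sum_ite {R : Type*} [AddCommMonoid R] (f : ι → ι → R) :
    ∑ q : {q : ι × ι // q.1 < q.2}, f q.1.1 q.1.2 = ∑ i, ∑ j, if i < j then f i j else 0 := by
  rw [← sum_subtype ({q : ι × ι | q.1 < q.2} : Finset _) (by simp) (fun q => f q.1 q.2),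
    sum_filter, Fintype.sum_prod_type]

theorem two_mul_sum_pairs_lt_add_sum_sq {R : Type*} [CommSemiring R] (f : ι → R) :
    2 * ∑ q : {q : ι × ι // q.1 < q.2}, f q.1.1 * f q.1.2 + ∑ i, f i ^ 2 = (∑ i, f i) ^ 2 := by
  have split : ∀ i j, f i * f j = ((if i < j then f i * f j else 0) +
      if j < i then f j * f i else 0) + if i = j then f i * f i else 0 := by
    intro i j
    rcases lt_trichotomy i j with h | h | h
    · simp [h, h.not_gt, h.ne]
    · simp [h]
    · simp [h, h.not_gt, h.ne', mul_comm]
  calc 2 * ∑ q : {q : ι × ι // q.1 < q.2}, f q.1.1 * f q.1.2 + ∑ i, f i ^ 2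
      = ∑ i, ∑ j, (((if i < j then f i * f j else 0) + if j < i then f j * f i else 0) +
          if i = j then f i * f i else 0) := by
        simp only [sum_pairs_lt_eq_sum_ite fun i j => f i * f j, sum_add_distrib, sum_ite_eq,
          mem_univ, if_true, sq]
        rw [sum_comm (f := fun i j => if j < i then f j * f i else 0)]
        ring
    _ = (∑ i, f i) ^ 2 := by
        rw [sq, sum_mul_sum]
        exact sum_congr rfl fun i _ => sum_congr rfl fun j _ => (split i j).symm

theorem sum_pairs_lt_min_lt_choose_two (e : ι → ℕ) {i₀ : ι} (h : 2 ≤ e i₀) :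
    ∑ q : {q : ι × ι // q.1 < q.2}, min (e q.1.1) (e q.1.2) < (∑ i, e i).choose 2 := by
  have hmin : ∑ q : {q : ι × ι // q.1 < q.2}, min (e q.1.1) (e q.1.2) ≤
      ∑ q : {q : ι × ι // q.1 < q.2}, e q.1.1 * e q.1.2 :=
    sum_le_sum fun q _ => by
      rcases Nat.eq_zero_or_pos (e q.1.2) with h0 | h0
      · simp [h0]
      · exact (min_le_left _ _).trans (Nat.le_mul_of_pos_right _ h0)
  have hsq : ∑ i, e i + 2 ≤ ∑ i, e i ^ 2 :=
    calc ∑ i, e i + 2 = ∑ i, (e i + if i = i₀ then 2 else 0) := by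
          simp [sum_add_distrib]
      _ ≤ ∑ i, e i ^ 2 := sum_le_sum fun i _ => by
          split_ifs with hi
          · subst hi; nlinarith
          · nlinarith
  have := two_mul_sum_pairs_lt_add_sum_sq e
  rw [Nat.choose_two_right, Nat.mul_sub_one, ← sq]
  omega

end PairSums

theorem CommGroup.card_dvd_prod_orderOf_of_closure_eq_top {M ι : Type*} [CommGroup M] [Fintype ι]
    {y : ι → M} (hy : closure (Set.range y) = ⊤) : Nat.card M ∣ ∏ i, orderOf (y i) := by
  have hcomm : Pairwise fun i j => ∀ a b : M, a ∈ zpowers (y i) → b ∈ zpowers (y j) → Commute a b :=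
    fun _ _ _ a b _ _ => Commute.all a b
  have hφ : Function.Surjective (noncommPiCoprod hcomm) := by
    rw [← MonoidHom.range_eq_top, Subgroup.noncommPiCoprod_range, ← hy,
      ← Set.iUnion_singleton_eq_range, Subgroup.closure_iUnion]
    simp only [zpowers_eq_closure]
  calc Nat.card M ∣ Nat.card (∀ i, zpowers (y i)) := card_dvd_of_surjective _ hφ
    _ = ∏ i, orderOf (y i) := by simp [Nat.card_pi, Nat.card_zpowers]

theorem CommGroup.pow_eq_one_of_closure_eq_top {G ι : Type*} [CommGroup G] {x : ι → G}
    (hx : closure (Set.range x) = ⊤) {n : ℕ} (hn : ∀ i, x i ^ n = 1) (g : G) : g ^ n = 1 := by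
  have : closure (Set.range x) ≤ (powMonoidHom n : G →* G).ker :=
    (closure_le _).2 (Set.range_subset_iff.2 hn)
  exact this (hx ▸ mem_top g)

section Bimultiplicative

variable {G H M : Type*} [Group G] [Group H] [CommGroup M]

theorem MonoidHom.apply_mem_closure_image2 (f : G →* H →* M) {s : Set G} {t : Set H}
    (hs : closure s = ⊤) (ht : closure t = ⊤) (g : G) (h : H) :
    f g h ∈ closure (Set.image2 (fun a b => f a b) s t) := by
  set K := closure (Set.image2 (fun a b => f a b) s t)
  have hleft : ∀ a ∈ s, ∀ h, f a h ∈ K := fun a ha h =>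
    have : closure t ≤ K.comap (f a) :=
      (closure_le _).2 fun b hb => subset_closure (Set.mem_image2_of_mem ha hb)
    this (ht ▸ mem_top h)
  have : closure s ≤ K.comap (f.flip h) := (closure_le _).2 fun a ha => hleft a ha h
  exact this (hs ▸ mem_top g)

theorem MonoidHom.apply_swap_of_apply_self (f : G →* G →* M) (hf : ∀ g, f g g = 1) (a b : G) :
    f b a = (f a b)⁻¹ := by
  refine eq_inv_of_mul_eq_one_right ?_
  simpa [hf] using hf (a * b)

theorem MonoidHom.closure_range_pairs_lt_eq_top {ι : Type*} [LinearOrder ι] (f : G →* G →* M)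
    (hf : ∀ g, f g g = 1) (hM : closure (Set.range fun q : G × G => f q.1 q.2) = ⊤) {x : ι → G}
    (hx : closure (Set.range x) = ⊤) :
    closure (Set.range fun q : {q : ι × ι // q.1 < q.2} => f (x q.1.1) (x q.1.2)) = ⊤ := by
  set K := closure (Set.range fun q : {q : ι × ι // q.1 < q.2} => f (x q.1.1) (x q.1.2))
  have hpairs : Set.image2 (fun a b => f a b) (Set.range x) (Set.range x) ⊆ K := by
    rintro _ ⟨_, ⟨i, rfl⟩, _, ⟨j, rfl⟩, rfl⟩
    dsimp only
    rcases lt_trichotomy i j with h | rfl | h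
    · exact subset_closure ⟨⟨(i, j), h⟩, rfl⟩
    · rw [hf]
      exact one_mem K
    · rw [MonoidHom.apply_swap_of_apply_self f hf]
      exact inv_mem (subset_closure ⟨⟨(j, i), h⟩, rfl⟩)
  rw [eq_top_iff, ← hM, closure_le]
  rintro _ ⟨⟨g, h⟩, rfl⟩
  exact (closure_le _).2 hpairs (MonoidHom.apply_mem_closure_image2 f hx hx g h)

end Bimultiplicative

theorem CommGroup.exists_generators_of_card_eq_prime_pow {G : Type*} [CommGroup G] {p n : ℕ}
    (hp : p.Prime) (hG : Nat.card G = p ^ n) :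
    ∃ (ι : Type) (_ : Fintype ι) (e : ι → ℕ) (x : ι → G),
      ∑ i, e i = n ∧ (∀ i, x i ^ p ^ e i = 1) ∧ closure (Set.range x) = ⊤ := by
  have : Finite G := Nat.finite_of_card_ne_zero (hG ▸ (pow_pos hp.pos n).ne')
  obtain ⟨ι, _, m, hm1, ⟨ε⟩⟩ := CommGroup.equiv_prod_multiplicative_zmod_of_finite G
  classical
  have hm : ∏ i, m i = p ^ n := by
    rw [← hG, Nat.card_congr ε.toEquiv, Nat.card_pi]
    exact Finset.prod_congr rfl fun i _ => (Nat.card_zmod _).symm.trans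
      (Nat.card_congr Multiplicative.toAdd).symm
  choose e _ he using fun i =>
    (Nat.dvd_prime_pow hp).1 (hm ▸ Finset.dvd_prod_of_mem m (Finset.mem_univ i))
  have (i : ι) : NeZero (m i) := ⟨(zero_lt_one.trans (hm1 i)).ne'⟩
  let x i := ε.symm (Pi.mulSingle i (Multiplicative.ofAdd 1))
  refine ⟨ι, inferInstance, e, x, ?_, fun i => ?_, ?_⟩
  · refine Nat.pow_right_injective hp.two_le ?_
    simp only [← Finset.prod_pow_eq_pow_sum, ← he, hm]
  · apply ε.injective
    rw [map_one, map_pow, MulEquiv.apply_symm_apply, ← Pi.mulSingle_pow, ← he, ← ofAdd_nsmul,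
      nsmul_one, ZMod.natCast_self, ofAdd_zero, Pi.mulSingle_one]
  · rw [eq_top_iff]
    intro g _
    have : g = ∏ i, x i ^ (Multiplicative.toAdd (ε g i)).val := by
      apply ε.injective
      simp only [x, map_prod, map_pow, MulEquiv.apply_symm_apply, ← Pi.mulSingle_pow, ← ofAdd_nsmul,
        nsmul_one, ZMod.natCast_zmod_val, ofAdd_toAdd, Finset.univ_prod_mulSingle]
    rw [this]
    exact prod_mem fun i _ => pow_mem (subset_closure (Set.mem_range_self i)) _

theorem presentation_of {G : Type*} [Group G] (g : G) : presentation G (FreeGroup.of g) = g :=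
  FreeGroup.lift_apply_of

namespace SchurMultiplier

open scoped commutatorElement

section Group

variable {G : Type*} [Group G]

theorem mk_eq_mk {w₁ w₂ : ↥((presentation G).ker ⊓ commutator (FreeGroup G))}
    (h : (w₁ : FreeGroup G)⁻¹ * w₂ ∈ ⁅(⊤ : Subgroup (FreeGroup G)), (presentation G).ker⁆) :
    (QuotientGroup.mk w₁ : SchurMultiplier G) = QuotientGroup.mk w₂ :=
  QuotientGroup.eq.mpr (mem_subgroupOf.mpr h)

/-- Relators are central modulo `⁅F, R⁆`, so Hopf's formula always gives an abelian group. -/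
noncomputable instance : CommGroup (SchurMultiplier G) where
  mul_comm x y := by
    induction x using QuotientGroup.induction_on with | H w₁ =>
    induction y using QuotientGroup.induction_on with | H w₂ =>
    refine mk_eq_mk (w₁ := w₁ * w₂) (w₂ := w₂ * w₁) ?_
    have : ((w₁ * w₂ : ↥((presentation G).ker ⊓ commutator (FreeGroup G))) : FreeGroup G)⁻¹ *
        ↑(w₂ * w₁) = ⁅(w₂ : FreeGroup G)⁻¹, (w₁ : FreeGroup G)⁻¹⁆ := by
      simp only [coe_mul, commutatorElement_def]
      group
    rw [this]
    exact commutator_mem_commutator (mem_top _) (inv_mem w₁.2.1)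

end Group

variable {G : Type*} [CommGroup G]

theorem commutatorElement_mem (a b : FreeGroup G) :
    ⁅a, b⁆ ∈ (presentation G).ker ⊓ commutator (FreeGroup G) :=
  mem_inf.mpr ⟨by rw [MonoidHom.mem_ker, map_commutatorElement,
      commutatorElement_eq_one_iff_mul_comm, mul_comm],
    commutator_mem_commutator (mem_top a) (mem_top b)⟩

def commutatorClass (a b : FreeGroup G) : SchurMultiplier G :=
  QuotientGroup.mk ⟨⁅a, b⁆, commutatorElement_mem a b⟩

theorem commutatorClass_mul_left (a b c : FreeGroup G) :
    commutatorClass (a * b) c = commutatorClass a c * commutatorClass b c := by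
  refine mk_eq_mk (w₂ := ⟨_, commutatorElement_mem a c⟩ * ⟨_, commutatorElement_mem b c⟩) ?_
  -- `⁅b, c⁆` is a relator, hence central modulo `⁅F, R⁆`; both factors of `key` lie in `⁅F, R⁆`.
  have hbc : ⁅b, c⁆⁻¹ ∈ (presentation G).ker := inv_mem (commutatorElement_mem b c).1
  have key : ⁅a * b, c⁆⁻¹ * (⁅a, c⁆ * ⁅b, c⁆) =
      (⁅a, c⁆⁻¹ * ⁅a, ⁅b, c⁆⁻¹⁆ * ⁅a, c⁆) * ⁅⁅a, c⁆⁻¹, ⁅b, c⁆⁻¹⁆ := by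
    simp only [commutatorElement_def]
    group
  show ⁅a * b, c⁆⁻¹ * (⁅a, c⁆ * ⁅b, c⁆) ∈ _
  rw [key]
  refine mul_mem ?_ (commutator_mem_commutator (mem_top _) hbc)
  simpa using (commutator_normal _ _).conj_mem _
    (commutator_mem_commutator (mem_top a) hbc) ⁅a, c⁆⁻¹

theorem commutatorClass_swap (a b : FreeGroup G) :
    commutatorClass b a = (commutatorClass a b)⁻¹ := by
  refine mk_eq_mk ?_
  show ⁅b, a⁆⁻¹ * ⁅a, b⁆⁻¹ ∈ _
  rw [commutatorElement_inv, mul_inv_cancel]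
  exact one_mem _

theorem commutatorClass_congr_left {a a' : FreeGroup G} (b : FreeGroup G)
    (h : presentation G a = presentation G a') : commutatorClass a b = commutatorClass a' b := by
  obtain ⟨r, hr, rfl⟩ : ∃ r ∈ (presentation G).ker, a = a' * r :=
    ⟨a'⁻¹ * a, by simp [MonoidHom.mem_ker, h], by group⟩
  refine mk_eq_mk ?_
  have key : ⁅a' * r, b⁆⁻¹ * ⁅a', b⁆ = (b * a') * ⁅b⁻¹, r⁆⁻¹ * (b * a')⁻¹ := by
    simp only [commutatorElement_def]
    group
  show _ ∈ _
  rw [key]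
  exact (commutator_normal _ _).conj_mem _ (inv_mem (commutator_mem_commutator (mem_top _) hr)) _

theorem commutatorClass_congr_right (a : FreeGroup G) {b b' : FreeGroup G}
    (h : presentation G b = presentation G b') : commutatorClass a b = commutatorClass a b' := by
  rw [commutatorClass_swap b a, commutatorClass_swap b' a, commutatorClass_congr_left a h]

theorem commutatorClass_mul_right (a b c : FreeGroup G) :
    commutatorClass a (b * c) = commutatorClass a b * commutatorClass a c := by
  rw [commutatorClass_swap (b * c) a, commutatorClass_mul_left, mul_inv, ← commutatorClass_swap,
    ← commutatorClass_swap]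

noncomputable def pairing : G →* G →* SchurMultiplier G :=
  MonoidHom.mk' (fun g => MonoidHom.mk' (fun h => commutatorClass (.of g) (.of h)) fun h h' => by
      rw [← commutatorClass_mul_right]
      exact commutatorClass_congr_right _ (by simp [presentation_of]))
    fun g g' => MonoidHom.ext fun h => by
      simp only [MonoidHom.mul_apply, MonoidHom.mk'_apply]
      rw [← commutatorClass_mul_left]
      exact commutatorClass_congr_left _ (by simp [presentation_of])

theorem pairing_presentation (a b : FreeGroup G) :
    pairing (presentation G a) (presentation G b) = commutatorClass a b :=
  (commutatorClass_congr_left _ (presentation_of _)).trans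
    (commutatorClass_congr_right _ (presentation_of _))

theorem pairing_self (g : G) : pairing g g = 1 := by
  refine (QuotientGroup.eq_one_iff _).mpr (mem_subgroupOf.mpr ?_)
  show ⁅FreeGroup.of g, FreeGroup.of g⁆ ∈ _
  rw [commutatorElement_self]
  exact one_mem _

theorem closure_range_pairing : closure (Set.range fun q : G × G => pairing q.1 q.2) = ⊤ := by
  set H := closure (Set.range fun q : G × G => pairing q.1 q.2)
  have hcomm : commutator (FreeGroup G) ≤ (H.comap (QuotientGroup.mk' _)).map
      ((presentation G).ker ⊓ commutator (FreeGroup G)).subtype := by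
    refine (_root_.commutator_def _).trans_le (commutator_le.mpr fun a _ b _ => ?_)
    exact ⟨⟨⁅a, b⁆, commutatorElement_mem a b⟩,
      subset_closure ⟨(presentation G a, presentation G b), pairing_presentation a b⟩, rfl⟩
  rw [eq_top_iff]
  rintro z -
  induction z using QuotientGroup.induction_on with | H w =>
  obtain ⟨w', hw', hw⟩ := hcomm (mem_inf.mp w.2).2
  rwa [Subtype.ext hw] at hw'

theorem card_dvd_pow_sum_pairs_lt_min {ι : Type*} [Fintype ι] [LinearOrder ι] {p : ℕ} {e : ι → ℕ}
    {x : ι → G} (hx : ∀ i, x i ^ p ^ e i = 1) (hgen : closure (Set.range x) = ⊤) :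
    Nat.card (SchurMultiplier G) ∣
      p ^ ∑ q : {q : ι × ι // q.1 < q.2}, min (e q.1.1) (e q.1.2) := by
  rw [← Finset.prod_pow_eq_pow_sum]
  refine (CommGroup.card_dvd_prod_orderOf_of_closure_eq_top
    (pairing.closure_range_pairs_lt_eq_top pairing_self closure_range_pairing hgen)).trans
    (Finset.prod_dvd_prod_of_dvd _ _ fun q _ => ?_)
  rcases min_choice (e q.1.1) (e q.1.2) with h | h <;> rw [h]
  · exact (orderOf_map_dvd (pairing.flip _) _).trans (orderOf_dvd_of_pow_eq_one (hx _))
  · exact (orderOf_map_dvd (pairing _) _).trans (orderOf_dvd_of_pow_eq_one (hx _))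

end SchurMultiplier

theorem elementary_abelian_of_max_schur_multiplier (p n : ℕ) (hp : p.Prime)
    (G : Type*) [CommGroup G] (hG : Nat.card G = p ^ n)
    (hM : Nat.card (SchurMultiplier G) = p ^ (n * (n - 1) / 2)) :
    ∀ g : G, g ^ p = 1 := by
  obtain ⟨ι, _, e, x, rfl, hx, hgen⟩ := CommGroup.exists_generators_of_card_eq_prime_pow hp hG
  let : LinearOrder ι := LinearOrder.lift' _ (Fintype.equivFin ι).injective
  have hcard := SchurMultiplier.card_dvd_pow_sum_pairs_lt_min hx hgen
  rw [hM, ← Nat.choose_two_right, Nat.pow_dvd_pow_iff_le_right hp.one_lt] at hcard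
  refine CommGroup.pow_eq_one_of_closure_eq_top hgen fun i => orderOf_dvd_iff_pow_eq_one.mp ?_
  have hei : e i ≤ 1 := by
    by_contra! h
    exact (sum_pairs_lt_min_lt_choose_two e h).not_ge hcard
  simpa using (orderOf_dvd_of_pow_eq_one (hx i)).trans (pow_dvd_pow p hei)
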